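/- Let q satisfy assumption (A) with constant K > 0 and fix L > 0, b > 0, m ∈ (0, K·L). Suppose U_∞ : [0,L] → ℝ is a nondecreasing function with 0 ≤ U_∞(x) ≤ K for all x and ∫₀^L U_∞(x) dx = m, and V_∞ : [0,L] → ℝ is a continuous nondecreasing function with V_∞(L) = b which is C¹ on [0,L] and satisfies V_∞'(x) = ∫₀^x U_∞(s)·V_∞(s) ds for all x ∈ [0,L], together with q(U_∞(x))·U_∞(x)·V_∞'(x) = 0 for all x ∈ (0,L). Then U_∞(x) = 0 for all x ∈ [0, L − m/K) and U_∞(x) = K for all x ∈ (L − m/K, L]. -/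

import Mathlib

open Real Set Filter MeasureTheory

noncomputable section

/-- Assumption (A): `q` is smooth, `q ≡ 0` above `K`, and `q > 0`, `q' < 0` on `(0,K)`. -/
def AssumptionA (q : ℝ → ℝ) (K : ℝ) : Prop :=
  ContDiff ℝ (⊤ : ℕ∞) q ∧ 0 < K ∧ (∀ u, K ≤ u → q u = 0) ∧
    (∀ u, 0 < u → u < K → 0 < q u) ∧ (∀ u, 0 < u → u < K → deriv q u < 0)

/-- The flux `(q(U) − q'(U)U)U' − χ q(U) U V'`. -/
def flux (q : ℝ → ℝ) (χ : ℝ) (U V : ℝ → ℝ) (x : ℝ) : ℝ :=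
  (q (U x) - deriv q (U x) * U x) * deriv U x - χ * (q (U x) * U x) * deriv V x

/-- Steady state of the chemotaxis-consumption model with volume-filling effect on `[0,L]`. -/
def IsSteadyState (q : ℝ → ℝ) (L χ b m : ℝ) (U V : ℝ → ℝ) : Prop :=
  ContDiffOn ℝ 2 U (Icc 0 L) ∧ ContDiffOn ℝ 2 V (Icc 0 L) ∧
  (∀ x ∈ Ioo (0:ℝ) L, deriv (flux q χ U V) x = 0) ∧
  (∀ x ∈ Ioo (0:ℝ) L, deriv (deriv V) x = U x * V x) ∧
  flux q χ U V 0 = 0 ∧ flux q χ U V L = 0 ∧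
  deriv V 0 = 0 ∧ V L = b ∧ (∫ x in (0:ℝ)..L, U x) = m

/-- characterization of the limit profile `U_∞` as a step function. -/
theorem statement12 (q : ℝ → ℝ) (K L b m : ℝ)
    (hA : AssumptionA q K) (hL : 0 < L) (hb : 0 < b) (hm : m ∈ Ioo 0 (K * L))
    (Uinf Vinf : ℝ → ℝ)
    (hUmono : MonotoneOn Uinf (Icc 0 L))
    (hUb : ∀ x ∈ Icc (0:ℝ) L, 0 ≤ Uinf x ∧ Uinf x ≤ K)
    (hUint : (∫ x in (0:ℝ)..L, Uinf x) = m)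
    (hVcont : ContinuousOn Vinf (Icc 0 L))
    (hVmono : MonotoneOn Vinf (Icc 0 L))
    (hVL : Vinf L = b)
    (hVC1 : ContDiffOn ℝ 1 Vinf (Icc 0 L))
    (hVderiv : ∀ x ∈ Icc (0:ℝ) L, deriv Vinf x = ∫ s in (0:ℝ)..x, Uinf s * Vinf s)
    (hlim : ∀ x ∈ Ioo (0:ℝ) L, q (Uinf x) * Uinf x * deriv Vinf x = 0) :
    (∀ x ∈ Ico (0:ℝ) (L - m / K), Uinf x = 0) ∧
    (∀ x ∈ Ioc (L - m / K) L, Uinf x = K) := by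
  obtain ⟨hq_smooth, hK, hq0, hqpos, hq'⟩ := hA
  obtain ⟨hm0, hmKL⟩ := hm
  set a : ℝ := L - m / K with ha_def
  clear_value a
  have hmKL' : m / K < L := (div_lt_iff₀ hK).2 (by linarith)
  have ha0 : 0 < a := by rw [ha_def]; linarith
  have hmK0 : 0 < m / K := div_pos hm0 hK
  have haL : a < L := by rw [ha_def]; linarith
  have hmem0 : (0:ℝ) ∈ Icc 0 L := ⟨le_rfl, hL.le⟩
  have hmemL : L ∈ Icc (0:ℝ) L := ⟨hL.le, le_rfl⟩
  have hsub : ∀ x y : ℝ, x ∈ Icc 0 L → y ∈ Icc 0 L → uIcc x y ⊆ Icc 0 L :=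
    fun x y hx hy => uIcc_subset_Icc hx hy
  have hUig : ∀ x y, x ∈ Icc (0:ℝ) L → y ∈ Icc (0:ℝ) L →
      IntervalIntegrable Uinf volume x y :=
    fun x y hx hy => (hUmono.mono (hsub x y hx hy)).intervalIntegrable
  have hUVig : ∀ x y, x ∈ Icc (0:ℝ) L → y ∈ Icc (0:ℝ) L →
      IntervalIntegrable (fun s => Uinf s * Vinf s) volume x y :=
    fun x y hx hy => (hUig x y hx hy).mul_continuousOn (hVcont.mono (hsub x y hx hy))
  -- continuity of deriv Vinf on [0,L]
  have hderivCont : ContinuousOn (deriv Vinf) (Icc 0 L) := by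
    have h1 : ContinuousOn (fun x => ∫ s in (0:ℝ)..x, Uinf s * Vinf s) (uIcc 0 L) :=
      intervalIntegral.continuousOn_primitive_interval' (hUVig 0 L hmem0 hmemL) left_mem_uIcc
    rw [uIcc_of_le hL.le] at h1
    exact h1.congr hVderiv
  -- fundamental theorem of calculus for Vinf
  have hFTC : ∀ c d : ℝ, 0 ≤ c → c ≤ d → d ≤ L →
      ∫ s in c..d, deriv Vinf s = Vinf d - Vinf c := by
    intro c d hc hcd hdL
    have hig : IntervalIntegrable (deriv Vinf) volume c d := by
      apply ContinuousOn.intervalIntegrable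
      rw [uIcc_of_le hcd]
      exact hderivCont.mono (Icc_subset_Icc hc hdL)
    refine intervalIntegral.integral_eq_sub_of_hasDeriv_right_of_le hcd
      (hVcont.mono (Icc_subset_Icc hc hdL)) (fun x hx => ?_) hig
    have hx' : x ∈ Ioo (0:ℝ) L := ⟨lt_of_le_of_lt hc hx.1, lt_of_lt_of_le hx.2 hdL⟩
    have hdiff : DifferentiableAt ℝ Vinf x :=
      ((hVC1.differentiableOn one_ne_zero) x ⟨hx'.1.le, hx'.2.le⟩).differentiableAt
        (Icc_mem_nhds hx'.1 hx'.2)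
    exact hdiff.hasDerivAt.hasDerivWithinAt
  -- positivity of Vinf 0
  have hVpos0 : 0 < Vinf 0 := by
    by_contra hneg
    push_neg at hneg
    set δ : ℝ := 1 / (K + 1) with hδ
    clear_value δ
    have hK1 : (0:ℝ) < K + 1 := by linarith
    have hδpos : 0 < δ := by rw [hδ]; positivity
    have hδ1 : δ * (K + 1) = 1 := by rw [hδ]; field_simp
    have hδK : K * δ * δ < 1 := by
      have h2 : (δ * (K + 1)) * (δ * (K + 1)) = 1 := by rw [hδ1]; norm_num
      nlinarith [mul_pos hδpos hδpos, mul_pos (mul_pos hδpos hδpos) hK, h2]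
    have step : ∀ c, c ∈ Icc (0:ℝ) L → Vinf c ≤ 0 → Vinf (min (c + δ) L) ≤ 0 := by
      intro c hc hVc
      set d := min (c + δ) L with hd
      have hcd : c ≤ d := le_min (by linarith) hc.2
      have hdL : d ≤ L := min_le_right _ _
      have hd0 : (0:ℝ) ≤ d := le_trans hc.1 hcd
      have hdmem : d ∈ Icc (0:ℝ) L := ⟨hd0, hdL⟩
      have hdc : d - c ≤ δ := by
        have : d ≤ c + δ := min_le_left _ _
        linarith
      by_contra hVd
      push_neg at hVd
      -- bound the derivative on [c,d]
      have hbound : ∀ x ∈ Icc c d, deriv Vinf x ≤ K * Vinf d * δ := by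
        intro x hx
        have hxmem : x ∈ Icc (0:ℝ) L := ⟨le_trans hc.1 hx.1, le_trans hx.2 hdL⟩
        rw [hVderiv x hxmem]
        have hsplit : (∫ s in (0:ℝ)..x, Uinf s * Vinf s)
            = (∫ s in (0:ℝ)..c, Uinf s * Vinf s) + ∫ s in c..x, Uinf s * Vinf s :=
          (intervalIntegral.integral_add_adjacent_intervals (hUVig 0 c hmem0 hc)
            (hUVig c x hc hxmem)).symm
        have h1 : (∫ s in (0:ℝ)..c, Uinf s * Vinf s) ≤ 0 := by
          have := intervalIntegral.integral_nonneg (μ := volume) (f := fun s => -(Uinf s * Vinf s)) hc.1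
            (fun s hs => by
              show (0:ℝ) ≤ -(Uinf s * Vinf s)
              have hsmem : s ∈ Icc (0:ℝ) L := ⟨hs.1, le_trans hs.2 hc.2⟩
              have hVs : Vinf s ≤ 0 := le_trans (hVmono hsmem hc hs.2) hVc
              have := mul_nonpos_of_nonneg_of_nonpos (hUb s hsmem).1 hVs
              linarith)
          rw [intervalIntegral.integral_neg] at this
          linarith
        have h2 : (∫ s in c..x, Uinf s * Vinf s) ≤ K * Vinf d * (x - c) := by
          have hmono := intervalIntegral.integral_mono_on hx.1 (hUVig c x hc hxmem)
            (intervalIntegrable_const (c := K * Vinf d))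
            (fun s hs => by
              have hsmem : s ∈ Icc (0:ℝ) L := ⟨le_trans hc.1 hs.1, le_trans hs.2 hxmem.2⟩
              have hVsd : Vinf s ≤ Vinf d := hVmono hsmem hdmem (le_trans hs.2 hx.2)
              rcases le_or_gt (Vinf s) 0 with h | h
              · have := mul_nonpos_of_nonneg_of_nonpos (hUb s hsmem).1 h
                nlinarith
              · calc Uinf s * Vinf s ≤ K * Vinf s :=
                      mul_le_mul_of_nonneg_right (hUb s hsmem).2 h.le
                  _ ≤ K * Vinf d := mul_le_mul_of_nonneg_left hVsd hK.le)
          rw [intervalIntegral.integral_const, smul_eq_mul] at hmono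
          linarith
        have hxc : x - c ≤ δ := by
          have := hx.2; linarith
        have hKVd : 0 ≤ K * Vinf d := mul_nonneg hK.le hVd.le
        nlinarith
      -- integrate the bound
      have hintb : (∫ s in c..d, deriv Vinf s) ≤ K * Vinf d * δ * (d - c) := by
        have hig : IntervalIntegrable (deriv Vinf) volume c d := by
          apply ContinuousOn.intervalIntegrable
          rw [uIcc_of_le hcd]
          exact hderivCont.mono (Icc_subset_Icc hc.1 hdL)
        have := intervalIntegral.integral_mono_on hcd hig
          (intervalIntegrable_const (c := K * Vinf d * δ)) hbound
        rw [intervalIntegral.integral_const, smul_eq_mul] at this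
        linarith
      rw [hFTC c d hc.1 hcd hdL] at hintb
      have hKVd : 0 ≤ K * Vinf d := mul_nonneg hK.le hVd.le
      have h4 : K * Vinf d * δ * (d - c) ≤ K * Vinf d * δ * δ :=
        mul_le_mul_of_nonneg_left hdc (mul_nonneg hKVd hδpos.le)
      have h5 : Vinf d ≤ K * Vinf d * δ * δ := by linarith
      have h6 : 0 < Vinf d * (1 - K * δ * δ) := mul_pos hVd (by linarith)
      nlinarith [h5, h6]
    have iter : ∀ n : ℕ, ∀ c, c ∈ Icc (0:ℝ) L → Vinf c ≤ 0 → L ≤ c + n * δ → Vinf L ≤ 0 := by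
      intro n
      induction n with
      | zero =>
        intro c hc hVc hLc
        simp only [Nat.cast_zero, zero_mul, add_zero] at hLc
        have : c = L := le_antisymm hc.2 hLc
        rwa [← this]
      | succ n ih =>
        intro c hc hVc hLc
        have hd := step c hc hVc
        have hdmem : min (c + δ) L ∈ Icc (0:ℝ) L :=
          ⟨le_trans hc.1 (le_min (by linarith) hc.2), min_le_right _ _⟩
        refine ih (min (c + δ) L) hdmem hd ?_
        rcases le_total (c + δ) L with h | h
        · rw [min_eq_left h]
          push_cast at hLc ⊢
          linarith
        · rw [min_eq_right h]
          have : (0:ℝ) ≤ (n:ℝ) * δ := mul_nonneg (Nat.cast_nonneg n) hδpos.le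
          linarith
    obtain ⟨n, hn⟩ := exists_nat_ge (L / δ)
    have hLn : L ≤ 0 + n * δ := by
      rw [zero_add]
      have : L / δ * δ ≤ n * δ := mul_le_mul_of_nonneg_right hn hδpos.le
      rwa [div_mul_cancel₀ _ hδpos.ne'] at this
    have := iter n 0 hmem0 hneg hLn
    rw [hVL] at this
    linarith
  have hVpos : ∀ x ∈ Icc (0:ℝ) L, 0 < Vinf x := fun x hx =>
    lt_of_lt_of_le hVpos0 (hVmono hmem0 hx hx.1)
  -- positivity of the primitive past a point where Uinf is positive
  have hFpos : ∀ y x : ℝ, 0 ≤ y → y < x → x ≤ L → 0 < Uinf y →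
      0 < ∫ s in (0:ℝ)..x, Uinf s * Vinf s := by
    intro y x hy hyx hxL hUy
    have hymem : y ∈ Icc (0:ℝ) L := ⟨hy, hyx.le.trans hxL⟩
    have hxmem : x ∈ Icc (0:ℝ) L := ⟨hy.trans hyx.le, hxL⟩
    have hsplit : (∫ s in (0:ℝ)..x, Uinf s * Vinf s)
        = (∫ s in (0:ℝ)..y, Uinf s * Vinf s) + ∫ s in y..x, Uinf s * Vinf s :=
      (intervalIntegral.integral_add_adjacent_intervals (hUVig 0 y hmem0 hymem)
        (hUVig y x hymem hxmem)).symm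
    have h1 : 0 ≤ ∫ s in (0:ℝ)..y, Uinf s * Vinf s :=
      intervalIntegral.integral_nonneg hy (fun s hs => mul_nonneg
        (hUb s ⟨hs.1, hs.2.trans hymem.2⟩).1 (hVpos s ⟨hs.1, hs.2.trans hymem.2⟩).le)
    have h2 : Uinf y * Vinf 0 * (x - y) ≤ ∫ s in y..x, Uinf s * Vinf s := by
      have hmono := intervalIntegral.integral_mono_on hyx.le
        (intervalIntegrable_const (c := Uinf y * Vinf 0)) (hUVig y x hymem hxmem)
        (fun s hs => by
          have hsmem : s ∈ Icc (0:ℝ) L := ⟨hy.trans hs.1, hs.2.trans hxL⟩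
          exact mul_le_mul (hUmono hymem hsmem hs.1) (hVmono hmem0 hsmem hsmem.1)
            hVpos0.le (hUb s hsmem).1)
      rw [intervalIntegral.integral_const, smul_eq_mul] at hmono
      linarith
    have h3 : 0 < Uinf y * Vinf 0 * (x - y) :=
      mul_pos (mul_pos hUy hVpos0) (sub_pos.2 hyx)
    linarith
  -- key step: if Uinf is positive at y then Uinf = K strictly to the right of y
  have hstepK : ∀ y ∈ Icc (0:ℝ) L, 0 < Uinf y → ∀ x ∈ Ioo y L, Uinf x = K := by
    intro y hy hUy x hx
    have hxmem : x ∈ Icc (0:ℝ) L := ⟨hy.1.trans hx.1.le, hx.2.le⟩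
    rcases lt_or_ge (Uinf x) K with hlt | hge
    · exfalso
      have hUx : 0 < Uinf x := lt_of_lt_of_le hUy (hUmono hy hxmem hx.1.le)
      have hxI : x ∈ Ioo (0:ℝ) L := ⟨lt_of_le_of_lt hy.1 hx.1, hx.2⟩
      have h0 := hlim x hxI
      have hqx : 0 < q (Uinf x) := hqpos _ hUx hlt
      have hd0 : deriv Vinf x = 0 := by
        rcases mul_eq_zero.1 h0 with h | h
        · rcases mul_eq_zero.1 h with h | h
          · exact absurd h hqx.ne'
          · exact absurd h hUx.ne'
        · exact h
      rw [hVderiv x hxmem] at hd0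
      exact absurd hd0 (hFpos y x hy.1 hx.1 hx.2.le hUy).ne'
    · exact le_antisymm (hUb x hxmem).2 hge
  have hKa : K * (L - a) = m := by
    rw [ha_def]
    field_simp
    ring
  constructor
  · -- Uinf = 0 on [0, a)
    intro x hx
    by_contra hUx0
    have hxL : x < L := lt_of_lt_of_le hx.2 haL.le
    have hxmem : x ∈ Icc (0:ℝ) L := ⟨hx.1, hxL.le⟩
    have hUx : 0 < Uinf x := lt_of_le_of_ne (hUb x hxmem).1 (Ne.symm hUx0)
    set x' : ℝ := (x + a) / 2 with hx'
    clear_value x'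
    have hxx' : x < x' := by rw [hx']; linarith [hx.2]
    have hx'a : x' < a := by rw [hx']; linarith [hx.2]
    have hx'L : x' < L := lt_of_lt_of_le hx'a haL.le
    have hx'mem : x' ∈ Icc (0:ℝ) L := ⟨hx.1.trans hxx'.le, hx'L.le⟩
    have hUK : ∀ s ∈ Icc x' L, Uinf s = K := by
      intro s hs
      have hsmem : s ∈ Icc (0:ℝ) L := ⟨hx'mem.1.trans hs.1, hs.2⟩
      rcases eq_or_lt_of_le hs.2 with hsL | hsL
      · have hmid : Uinf x' = K := hstepK x hxmem hUx x' ⟨hxx', hx'L⟩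
        refine le_antisymm (hUb s hsmem).2 ?_
        rw [← hmid]
        exact hUmono hx'mem hsmem hs.1
      · exact hstepK x hxmem hUx s ⟨lt_of_lt_of_le hxx' hs.1, hsL⟩
    have hint1 : (∫ s in x'..L, Uinf s) = K * (L - x') := by
      rw [intervalIntegral.integral_congr (g := fun _ => K)
        (fun s hs => by rw [uIcc_of_le hx'L.le] at hs; exact hUK s hs)]
      rw [intervalIntegral.integral_const, smul_eq_mul]
      ring
    have hint0 : 0 ≤ ∫ s in (0:ℝ)..x', Uinf s :=
      intervalIntegral.integral_nonneg hx'mem.1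
        (fun s hs => (hUb s ⟨hs.1, hs.2.trans hx'mem.2⟩).1)
    have hsplit : m = (∫ s in (0:ℝ)..x', Uinf s) + ∫ s in x'..L, Uinf s := by
      rw [← hUint]
      exact (intervalIntegral.integral_add_adjacent_intervals (hUig 0 x' hmem0 hx'mem)
        (hUig x' L hx'mem hmemL)).symm
    have hgt : K * (L - a) < K * (L - x') :=
      mul_lt_mul_of_pos_left (by linarith) hK
    rw [hKa] at hgt
    linarith
  · -- Uinf = K on (a, L]
    intro x hx
    by_contra hUxK
    have hx0 : 0 < x := ha0.trans hx.1
    have hxmem : x ∈ Icc (0:ℝ) L := ⟨hx0.le, hx.2⟩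
    have hUx : Uinf x < K := lt_of_le_of_ne (hUb x hxmem).2 hUxK
    have hzero : ∀ s ∈ Ico (0:ℝ) x, Uinf s = 0 := by
      intro s hs
      have hsmem : s ∈ Icc (0:ℝ) L := ⟨hs.1, hs.2.le.trans hx.2⟩
      rcases eq_or_lt_of_le (hUb s hsmem).1 with h | h
      · exact h.symm
      exfalso
      set t : ℝ := (s + x) / 2 with ht
      clear_value t
      have hst : s < t := by rw [ht]; linarith [hs.2]
      have htx : t < x := by rw [ht]; linarith [hs.2]
      have ht0 : 0 < t := lt_of_le_of_lt hs.1 hst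
      have htL : t < L := lt_of_lt_of_le htx hx.2
      have htmem : t ∈ Icc (0:ℝ) L := ⟨ht0.le, htL.le⟩
      have hUt : 0 < Uinf t := lt_of_lt_of_le h (hUmono hsmem htmem hst.le)
      have hUtK : Uinf t < K := lt_of_le_of_lt (hUmono htmem hxmem htx.le) hUx
      have h0 := hlim t ⟨ht0, htL⟩
      have hqt : 0 < q (Uinf t) := hqpos _ hUt hUtK
      have hd0 : deriv Vinf t = 0 := by
        rcases mul_eq_zero.1 h0 with h' | h'
        · rcases mul_eq_zero.1 h' with h' | h'
          · exact absurd h' hqt.ne'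
          · exact absurd h' hUt.ne'
        · exact h'
      rw [hVderiv t htmem] at hd0
      exact absurd hd0 (hFpos s t hs.1 hst htL.le h).ne'
    set x' : ℝ := (a + x) / 2 with hx'
    clear_value x'
    have hax' : a < x' := by rw [hx']; linarith [hx.1]
    have hx'x : x' < x := by rw [hx']; linarith [hx.1]
    have hx'0 : 0 < x' := ha0.trans hax'
    have hx'mem : x' ∈ Icc (0:ℝ) L := ⟨hx'0.le, (hx'x.le).trans hx.2⟩
    have hint0 : (∫ s in (0:ℝ)..x', Uinf s) = 0 := by
      rw [intervalIntegral.integral_congr (g := fun _ => (0:ℝ))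
        (fun s hs => by
          rw [uIcc_of_le hx'0.le] at hs
          exact hzero s ⟨hs.1, lt_of_le_of_lt hs.2 hx'x⟩)]
      simp
    have hint1 : (∫ s in x'..L, Uinf s) ≤ K * (L - x') := by
      have hmono := intervalIntegral.integral_mono_on hx'mem.2 (hUig x' L hx'mem hmemL)
        (intervalIntegrable_const (c := K))
        (fun s hs => (hUb s ⟨hx'0.le.trans hs.1, hs.2⟩).2)
      rw [intervalIntegral.integral_const, smul_eq_mul] at hmono
      linarith
    have hsplit : m = (∫ s in (0:ℝ)..x', Uinf s) + ∫ s in x'..L, Uinf s := by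
      rw [← hUint]
      exact (intervalIntegral.integral_add_adjacent_intervals (hUig 0 x' hmem0 hx'mem)
        (hUig x' L hx'mem hmemL)).symm
    have hlt : K * (L - x') < K * (L - a) :=
      mul_lt_mul_of_pos_left (by linarith) hK
    rw [hKa] at hlt
    linarith
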